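/- arXiv:1407.1447 — 2 statements merged into one kernel-verified Lean document; each statement's English description precedes it below -/
import Mathlib

section
/- Let A, B, C, D, E, F be any six pairwise non-proportional points of the conic K. Then the Pascal lines of the arrays [[A,B,C],[F,E,D]] and [[A,F,D],[B,E,C]] never coincide: the cross product of the two Pascal vectors is nonzero. -/
open Matrix

local infixl:74 " ×₃ " => crossProduct

namespace PascalStmt

noncomputable section

/-- Membership in the conic `K = {y : y₀y₂ = y₁²}`. -/
def OnK (y : Fin 3 → ℂ) : Prop := y 0 * y 2 = y 1 ^ 2

/-- The tangent line to `K` at a point `y` of `K`. -/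
def tangentK (y : Fin 3 → ℂ) : Fin 3 → ℂ := ![y 2, -(2 * y 1), y 0]

/-- First cross-hair point of the array `[[P₁,P₂,P₃],[P₄,P₅,P₆]]`. -/
def chX1 (P₁ P₂ P₃ P₄ P₅ P₆ : Fin 3 → ℂ) : Fin 3 → ℂ := (P₁ ×₃ P₅) ×₃ (P₂ ×₃ P₄)

/-- Second cross-hair point of the array `[[P₁,P₂,P₃],[P₄,P₅,P₆]]`. -/
def chX2 (P₁ P₂ P₃ P₄ P₅ P₆ : Fin 3 → ℂ) : Fin 3 → ℂ := (P₁ ×₃ P₆) ×₃ (P₃ ×₃ P₄)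

/-- Third cross-hair point of the array `[[P₁,P₂,P₃],[P₄,P₅,P₆]]`. -/
def chX3 (P₁ P₂ P₃ P₄ P₅ P₆ : Fin 3 → ℂ) : Fin 3 → ℂ := (P₂ ×₃ P₆) ×₃ (P₃ ×₃ P₅)

/-- The Pascal line vector of the array `[[P₁,P₂,P₃],[P₄,P₅,P₆]]`. -/
def pascalVec (P₁ P₂ P₃ P₄ P₅ P₆ : Fin 3 → ℂ) : Fin 3 → ℂ :=
  chX1 P₁ P₂ P₃ P₄ P₅ P₆ ×₃ chX2 P₁ P₂ P₃ P₄ P₅ P₆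

/-- Six points, pairwise non-proportional (in particular all nonzero). -/
def PairwiseNonProp (P : Fin 6 → (Fin 3 → ℂ)) : Prop :=
  ∀ i j, i ≠ j → ∀ c : ℂ, P i ≠ c • P j

private lemma smul_cross₃ (c : ℂ) (u v : Fin 3 → ℂ) : (c • u) ×₃ v = c • (u ×₃ v) := by
  rw [LinearMap.map_smul, LinearMap.smul_apply]

private lemma cross_smul₃ (c : ℂ) (u v : Fin 3 → ℂ) : u ×₃ (c • v) = c • (u ×₃ v) :=
  (crossProduct u).map_smul c v

private lemma pascal_smul (c₁ c₂ c₃ c₄ c₅ c₆ : ℂ) (P₁ P₂ P₃ P₄ P₅ P₆ : Fin 3 → ℂ) :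
    pascalVec (c₁ • P₁) (c₂ • P₂) (c₃ • P₃) (c₄ • P₄) (c₅ • P₅) (c₆ • P₆)
      = (c₁^2*c₂*c₃*c₄^2*c₅*c₆) • pascalVec P₁ P₂ P₃ P₄ P₅ P₆ := by
  simp only [pascalVec, chX1, chX2, smul_cross₃, cross_smul₃, smul_smul]
  congr 1
  ring

private lemma vec3_eq {u v : Fin 3 → ℂ} (h0 : u 0 = v 0) (h1 : u 1 = v 1)
    (h2 : u 2 = v 2) : u = v := by
  funext i
  fin_cases i <;> assumption

private lemma param {y : Fin 3 → ℂ} (hy : OnK y) (h0 : y ≠ 0) :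
    ∃ c s t : ℂ, c ≠ 0 ∧ y = c • ![s^2, s*t, t^2] := by
  by_cases h : y 0 = 0
  · have h1 : y 1 = 0 := by
      have h2 := hy
      rw [OnK, h, zero_mul] at h2
      exact (pow_eq_zero_iff two_ne_zero).mp h2.symm
    refine ⟨y 2, 0, 1, ?_, ?_⟩
    · intro h2
      exact h0 (vec3_eq (by simp [h]) (by simp [h1]) (by simp [h2]))
    · exact vec3_eq (by simp [h]) (by simp [h1]) (by simp)
  · have hy2 : y 0 * y 2 = y 1 ^ 2 := hy
    refine ⟨(y 0)⁻¹, y 0, y 1, inv_ne_zero h, vec3_eq ?_ ?_ ?_⟩ <;>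
      simp only [Pi.smul_apply, smul_eq_mul, Matrix.cons_val_zero, Matrix.cons_val_one,
        Matrix.head_cons, Matrix.cons_val_two, Matrix.tail_cons] <;>
      field_simp
    · linear_combination hy2

private lemma res_ne {P Q : Fin 3 → ℂ} {c d s t u v : ℂ} (hc : c ≠ 0) (hd : d ≠ 0)
    (hP : P = c • ![s^2, s*t, t^2]) (hQ : Q = d • ![u^2, u*v, v^2])
    (hPQ : ∀ e : ℂ, P ≠ e • Q) (hQP : ∀ e : ℂ, Q ≠ e • P) : s*v - u*t ≠ 0 := by
  intro hr
  have hQ0 : Q ≠ 0 := fun hq => hQP 0 (by rw [hq]; simp)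
  by_cases hu : u = 0
  · have hv : v ≠ 0 := by
      intro hv
      exact hQ0 (by rw [hQ, hu, hv]; exact vec3_eq (by simp) (by simp) (by simp))
    have hs : s = 0 := by
      have hz : s * v = 0 := by rw [hu] at hr; linear_combination hr
      rcases mul_eq_zero.mp hz with h' | h'
      · exact h'
      · exact absurd h' hv
    apply hPQ (c * t^2 / (d * v^2))
    subst hs hu
    rw [hP, hQ, smul_smul]
    refine vec3_eq ?_ ?_ ?_ <;>
      simp only [Pi.smul_apply, smul_eq_mul, Matrix.cons_val_zero, Matrix.cons_val_one,
        Matrix.head_cons, Matrix.cons_val_two, Matrix.tail_cons] <;>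
      field_simp <;>
      ring
  · apply hPQ (c * s^2 / (d * u^2))
    rw [hP, hQ, smul_smul]
    refine vec3_eq ?_ ?_ ?_ <;>
      simp only [Pi.smul_apply, smul_eq_mul, Matrix.cons_val_zero, Matrix.cons_val_one,
        Matrix.head_cons, Matrix.cons_val_two, Matrix.tail_cons] <;>
      field_simp
    · linear_combination (-s) * hr
    · linear_combination (-(s*v+u*t)) * hr

private lemma cross_cross (a b c : Fin 3 → ℂ) :
    (a ×₃ b) ×₃ (a ×₃ c)
      = (a 0 * (b 1 * c 2 - b 2 * c 1) + a 1 * (b 2 * c 0 - b 0 * c 2)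
          + a 2 * (b 0 * c 1 - b 1 * c 0)) • a := by
  refine vec3_eq ?_ ?_ ?_ <;> simp [cross_apply] <;> ring

set_option maxHeartbeats 2000000 in
private lemma core (a0 b0 a1 b1 a2 b2 a3 b3 a4 b4 a5 b5 : ℂ)
    (h01 : a0*b1 - a1*b0 ≠ 0)
    (h02 : a0*b2 - a2*b0 ≠ 0)
    (h03 : a0*b3 - a3*b0 ≠ 0)
    (h04 : a0*b4 - a4*b0 ≠ 0)
    (h05 : a0*b5 - a5*b0 ≠ 0)
    (h12 : a1*b2 - a2*b1 ≠ 0)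
    (h13 : a1*b3 - a3*b1 ≠ 0)
    (h14 : a1*b4 - a4*b1 ≠ 0)
    (h15 : a1*b5 - a5*b1 ≠ 0)
    (h23 : a2*b3 - a3*b2 ≠ 0)
    (h25 : a2*b5 - a5*b2 ≠ 0)
    (h35 : a3*b5 - a5*b3 ≠ 0)
    (h45 : a4*b5 - a5*b4 ≠ 0) :
    pascalVec ![a0^2, a0*b0, b0^2] ![a1^2, a1*b1, b1^2] ![a2^2, a2*b2, b2^2] ![a5^2, a5*b5, b5^2] ![a4^2, a4*b4, b4^2] ![a3^2, a3*b3, b3^2] ×₃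
      pascalVec ![a0^2, a0*b0, b0^2] ![a5^2, a5*b5, b5^2] ![a3^2, a3*b3, b3^2] ![a1^2, a1*b1, b1^2] ![a4^2, a4*b4, b4^2] ![a2^2, a2*b2, b2^2] ≠ 0 := by
  have h51 : a5*b1 - a1*b5 ≠ 0 := fun hz => h15 (by linear_combination -hz)
  have h31 : a3*b1 - a1*b3 ≠ 0 := fun hz => h13 (by linear_combination -hz)
  have hc04 : (![a0^2, a0*b0, b0^2] : Fin 3 → ℂ) ×₃ ![a4^2, a4*b4, b4^2] = (a0*b4 - a4*b0) • ![b0*b4, -(a0*b4 + a4*b0), a0*a4] := by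
    refine vec3_eq ?_ ?_ ?_ <;> simp [cross_apply] <;> ring
  have hc15 : (![a1^2, a1*b1, b1^2] : Fin 3 → ℂ) ×₃ ![a5^2, a5*b5, b5^2] = (a1*b5 - a5*b1) • ![b1*b5, -(a1*b5 + a5*b1), a1*a5] := by
    refine vec3_eq ?_ ?_ ?_ <;> simp [cross_apply] <;> ring
  have hc03 : (![a0^2, a0*b0, b0^2] : Fin 3 → ℂ) ×₃ ![a3^2, a3*b3, b3^2] = (a0*b3 - a3*b0) • ![b0*b3, -(a0*b3 + a3*b0), a0*a3] := by
    refine vec3_eq ?_ ?_ ?_ <;> simp [cross_apply] <;> ring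
  have hc25 : (![a2^2, a2*b2, b2^2] : Fin 3 → ℂ) ×₃ ![a5^2, a5*b5, b5^2] = (a2*b5 - a5*b2) • ![b2*b5, -(a2*b5 + a5*b2), a2*a5] := by
    refine vec3_eq ?_ ?_ ?_ <;> simp [cross_apply] <;> ring
  have hc51 : (![a5^2, a5*b5, b5^2] : Fin 3 → ℂ) ×₃ ![a1^2, a1*b1, b1^2] = (a5*b1 - a1*b5) • ![b1*b5, -(a1*b5 + a5*b1), a1*a5] := by
    refine vec3_eq ?_ ?_ ?_ <;> simp [cross_apply] <;> ring
  have hc02 : (![a0^2, a0*b0, b0^2] : Fin 3 → ℂ) ×₃ ![a2^2, a2*b2, b2^2] = (a0*b2 - a2*b0) • ![b0*b2, -(a0*b2 + a2*b0), a0*a2] := by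
    refine vec3_eq ?_ ?_ ?_ <;> simp [cross_apply] <;> ring
  have hc31 : (![a3^2, a3*b3, b3^2] : Fin 3 → ℂ) ×₃ ![a1^2, a1*b1, b1^2] = (a3*b1 - a1*b3) • ![b1*b3, -(a1*b3 + a3*b1), a1*a3] := by
    refine vec3_eq ?_ ?_ ?_ <;> simp [cross_apply] <;> ring
  have hY1 : (![b0*b4, -(a0*b4 + a4*b0), a0*a4] : Fin 3 → ℂ) ×₃ ![b1*b5, -(a1*b5 + a5*b1), a1*a5] = ![a0*a1*a4*b5 - a0*a1*a5*b4 + a0*a4*a5*b1 - a1*a4*a5*b0, a0*a4*b1*b5 - a1*a5*b0*b4, a0*b1*b4*b5 - a1*b0*b4*b5 + a4*b0*b1*b5 - a5*b0*b1*b4] := by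
    refine vec3_eq ?_ ?_ ?_ <;> simp [cross_apply] <;> ring
  have hY2 : (![b0*b3, -(a0*b3 + a3*b0), a0*a3] : Fin 3 → ℂ) ×₃ ![b2*b5, -(a2*b5 + a5*b2), a2*a5] = ![a0*a2*a3*b5 - a0*a2*a5*b3 + a0*a3*a5*b2 - a2*a3*a5*b0, a0*a3*b2*b5 - a2*a5*b0*b3, a0*b2*b3*b5 - a2*b0*b3*b5 + a3*b0*b2*b5 - a5*b0*b2*b3] := by
    refine vec3_eq ?_ ?_ ?_ <;> simp [cross_apply] <;> ring
  have hY3 : (![b0*b2, -(a0*b2 + a2*b0), a0*a2] : Fin 3 → ℂ) ×₃ ![b1*b3, -(a1*b3 + a3*b1), a1*a3] = ![a0*a1*a2*b3 - a0*a1*a3*b2 + a0*a2*a3*b1 - a1*a2*a3*b0, a0*a2*b1*b3 - a1*a3*b0*b2, a0*b1*b2*b3 - a1*b0*b2*b3 + a2*b0*b1*b3 - a3*b0*b1*b2] := by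
    refine vec3_eq ?_ ?_ ?_ <;> simp [cross_apply] <;> ring
  have hp1 : pascalVec ![a0^2, a0*b0, b0^2] ![a1^2, a1*b1, b1^2] ![a2^2, a2*b2, b2^2] ![a5^2, a5*b5, b5^2] ![a4^2, a4*b4, b4^2] ![a3^2, a3*b3, b3^2]
      = ((a0*b4 - a4*b0) * (a1*b5 - a5*b1) * ((a0*b3 - a3*b0) * (a2*b5 - a5*b2))) • (![a0*a1*a4*b5 - a0*a1*a5*b4 + a0*a4*a5*b1 - a1*a4*a5*b0, a0*a4*b1*b5 - a1*a5*b0*b4, a0*b1*b4*b5 - a1*b0*b4*b5 + a4*b0*b1*b5 - a5*b0*b1*b4] ×₃ ![a0*a2*a3*b5 - a0*a2*a5*b3 + a0*a3*a5*b2 - a2*a3*a5*b0, a0*a3*b2*b5 - a2*a5*b0*b3, a0*b2*b3*b5 - a2*b0*b3*b5 + a3*b0*b2*b5 - a5*b0*b2*b3]) := by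
    show ((![a0^2, a0*b0, b0^2] ×₃ ![a4^2, a4*b4, b4^2]) ×₃ (![a1^2, a1*b1, b1^2] ×₃ ![a5^2, a5*b5, b5^2])) ×₃ ((![a0^2, a0*b0, b0^2] ×₃ ![a3^2, a3*b3, b3^2]) ×₃ (![a2^2, a2*b2, b2^2] ×₃ ![a5^2, a5*b5, b5^2])) = _
    simp only [hc04, hc15, hc03, hc25, smul_cross₃, cross_smul₃, smul_smul, hY1, hY2]
    all_goals module
  have hp2 : pascalVec ![a0^2, a0*b0, b0^2] ![a5^2, a5*b5, b5^2] ![a3^2, a3*b3, b3^2] ![a1^2, a1*b1, b1^2] ![a4^2, a4*b4, b4^2] ![a2^2, a2*b2, b2^2]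
      = ((a0*b4 - a4*b0) * (a5*b1 - a1*b5) * ((a0*b2 - a2*b0) * (a3*b1 - a1*b3))) • (![a0*a1*a4*b5 - a0*a1*a5*b4 + a0*a4*a5*b1 - a1*a4*a5*b0, a0*a4*b1*b5 - a1*a5*b0*b4, a0*b1*b4*b5 - a1*b0*b4*b5 + a4*b0*b1*b5 - a5*b0*b1*b4] ×₃ ![a0*a1*a2*b3 - a0*a1*a3*b2 + a0*a2*a3*b1 - a1*a2*a3*b0, a0*a2*b1*b3 - a1*a3*b0*b2, a0*b1*b2*b3 - a1*b0*b2*b3 + a2*b0*b1*b3 - a3*b0*b1*b2]) := by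
    show ((![a0^2, a0*b0, b0^2] ×₃ ![a4^2, a4*b4, b4^2]) ×₃ (![a5^2, a5*b5, b5^2] ×₃ ![a1^2, a1*b1, b1^2])) ×₃ ((![a0^2, a0*b0, b0^2] ×₃ ![a2^2, a2*b2, b2^2]) ×₃ (![a3^2, a3*b3, b3^2] ×₃ ![a1^2, a1*b1, b1^2])) = _
    simp only [hc04, hc51, hc02, hc31, smul_cross₃, cross_smul₃, smul_smul, hY1, hY3]
    all_goals module
  have hW : (![a0*a1*a4*b5 - a0*a1*a5*b4 + a0*a4*a5*b1 - a1*a4*a5*b0, a0*a4*b1*b5 - a1*a5*b0*b4, a0*b1*b4*b5 - a1*b0*b4*b5 + a4*b0*b1*b5 - a5*b0*b1*b4] ×₃ ![a0*a2*a3*b5 - a0*a2*a5*b3 + a0*a3*a5*b2 - a2*a3*a5*b0, a0*a3*b2*b5 - a2*a5*b0*b3, a0*b2*b3*b5 - a2*b0*b3*b5 + a3*b0*b2*b5 - a5*b0*b2*b3]) ×₃ (![a0*a1*a4*b5 - a0*a1*a5*b4 + a0*a4*a5*b1 - a1*a4*a5*b0, a0*a4*b1*b5 - a1*a5*b0*b4,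 a0*b1*b4*b5 - a1*b0*b4*b5 + a4*b0*b1*b5 - a5*b0*b1*b4] ×₃ ![a0*a1*a2*b3 - a0*a1*a3*b2 + a0*a2*a3*b1 - a1*a2*a3*b0, a0*a2*b1*b3 - a1*a3*b0*b2, a0*b1*b2*b3 - a1*b0*b2*b3 + a2*b0*b1*b3 - a3*b0*b1*b2])
      = ((a0*a1*a4*b5 - a0*a1*a5*b4 + a0*a4*a5*b1 - a1*a4*a5*b0) * ((a0*a3*b2*b5 - a2*a5*b0*b3) * (a0*b1*b2*b3 - a1*b0*b2*b3 + a2*b0*b1*b3 - a3*b0*b1*b2) - (a0*b2*b3*b5 - a2*b0*b3*b5 + a3*b0*b2*b5 - a5*b0*b2*b3) * (a0*a2*b1*b3 - a1*a3*b0*b2)) + (a0*a4*b1*b5 - a1*a5*b0*b4) * ((a0*b2*b3*b5 - a2*b0*b3*b5 + a3*b0*b2*b5 - a5*b0*b2*b3) * (a0*a1*a2*b3 - a0*a1*a3*b2 + a0*a2*a3*b1 - a1*a2*a3*b0) - (a0*a2*a3*b5 - a0*a2*a5*b3 + a0*a3*a5*b2 - a2*a3*a5*b0) * (a0*b1*b2*b3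 - a1*b0*b2*b3 + a2*b0*b1*b3 - a3*b0*b1*b2)) + (a0*b1*b4*b5 - a1*b0*b4*b5 + a4*b0*b1*b5 - a5*b0*b1*b4) * ((a0*a2*a3*b5 - a0*a2*a5*b3 + a0*a3*a5*b2 - a2*a3*a5*b0) * (a0*a2*b1*b3 - a1*a3*b0*b2) - (a0*a3*b2*b5 - a2*a5*b0*b3) * (a0*a1*a2*b3 - a0*a1*a3*b2 + a0*a2*a3*b1 - a1*a2*a3*b0))) • ![a0*a1*a4*b5 - a0*a1*a5*b4 + a0*a4*a5*b1 - a1*a4*a5*b0, a0*a4*b1*b5 - a1*a5*b0*b4, a0*b1*b4*b5 - a1*b0*b4*b5 + a4*b0*b1*b5 - a5*b0*b1*b4] := by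
    rw [cross_cross]
    congr 1
  have hDne : ((a0*a1*a4*b5 - a0*a1*a5*b4 + a0*a4*a5*b1 - a1*a4*a5*b0) * ((a0*a3*b2*b5 - a2*a5*b0*b3) * (a0*b1*b2*b3 - a1*b0*b2*b3 + a2*b0*b1*b3 - a3*b0*b1*b2) - (a0*b2*b3*b5 - a2*b0*b3*b5 + a3*b0*b2*b5 - a5*b0*b2*b3) * (a0*a2*b1*b3 - a1*a3*b0*b2)) + (a0*a4*b1*b5 - a1*a5*b0*b4) * ((a0*b2*b3*b5 - a2*b0*b3*b5 + a3*b0*b2*b5 - a5*b0*b2*b3) * (a0*a1*a2*b3 - a0*a1*a3*b2 + a0*a2*a3*b1 - a1*a2*a3*b0) - (a0*a2*a3*b5 - a0*a2*a5*b3 + a0*a3*a5*b2 - a2*a3*a5*b0) * (a0*b1*b2*b3 - a1*b0*b2*b3 + a2*b0*b1*b3 - a3*b0*b1*b2)) + (a0*b1*b4*b5 - a1*b0*b4*b5 + a4*b0*b1*b5 - a5*b0*b1*b4) * ((a0*a2*a3*b5 - a0*a2*a5*b3 + a0*a3*a5*b2 - a2*a3*a5*b0) * (a0*a2*b1*b3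 - a1*a3*b0*b2) - (a0*a3*b2*b5 - a2*a5*b0*b3) * (a0*a1*a2*b3 - a0*a1*a3*b2 + a0*a2*a3*b1 - a1*a2*a3*b0))) ≠ 0 := by
    intro hz
    refine mul_ne_zero (mul_ne_zero (mul_ne_zero (mul_ne_zero (mul_ne_zero h01 h04) h05) h12) h23) h35 ?_
    show (a0*b1 - a1*b0)*(a0*b4 - a4*b0)*(a0*b5 - a5*b0)*(a1*b2 - a2*b1)*(a2*b3 - a3*b2)*(a3*b5 - a5*b3) = 0
    linear_combination -hz
  have hYne : (![a0*a1*a4*b5 - a0*a1*a5*b4 + a0*a4*a5*b1 - a1*a4*a5*b0, a0*a4*b1*b5 - a1*a5*b0*b4, a0*b1*b4*b5 - a1*b0*b4*b5 + a4*b0*b1*b5 - a5*b0*b1*b4] : Fin 3 → ℂ) ≠ 0 := by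
    intro hy
    have c0 := congrFun hy 0
    have c1 := congrFun hy 1
    simp only [Matrix.cons_val_zero, Matrix.cons_val_one, Matrix.head_cons, Pi.zero_apply] at c0 c1
    refine mul_ne_zero (mul_ne_zero (mul_ne_zero h01 h05) h14) h45 ?_
    show (a0*b1 - a1*b0)*(a0*b5 - a5*b0)*(a1*b4 - a4*b1)*(a4*b5 - a5*b4) = 0
    linear_combination (a0*b1*b4*b5 - a1*b0*b4*b5 + a4*b0*b1*b5 - a5*b0*b1*b4) * c0 - (a0*a4*b1*b5 - a1*a5*b0*b4) * c1
  rw [hp1, hp2]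
  simp only [smul_cross₃, cross_smul₃, smul_smul, hW]
  refine smul_ne_zero ?_ hYne
  intro hz
  simp only [mul_eq_zero] at hz
  tauto


set_option maxHeartbeats 4000000 in
theorem pascals_never_coincide_I6
    (A B C D E F : Fin 3 → ℂ)
    (hdist : PairwiseNonProp ![A, B, C, D, E, F])
    (hKA : OnK A) (hKB : OnK B) (hKC : OnK C)
    (hKD : OnK D) (hKE : OnK E) (hKF : OnK F) :
    pascalVec A B C F E D ×₃ pascalVec A F D B E C ≠ 0 := by
  have npAB : ∀ e : ℂ, A ≠ e • B := fun e => by simpa using hdist 0 1 (by decide) e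
  have npBA : ∀ e : ℂ, B ≠ e • A := fun e => by simpa using hdist 1 0 (by decide) e
  have npAC : ∀ e : ℂ, A ≠ e • C := fun e => by simpa using hdist 0 2 (by decide) e
  have npCA : ∀ e : ℂ, C ≠ e • A := fun e => by simpa using hdist 2 0 (by decide) e
  have npAD : ∀ e : ℂ, A ≠ e • D := fun e => by simpa using hdist 0 3 (by decide) e
  have npDA : ∀ e : ℂ, D ≠ e • A := fun e => by simpa using hdist 3 0 (by decide) e
  have npAE : ∀ e : ℂ, A ≠ e • E := fun e => by simpa using hdist 0 4 (by decide) e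
  have npEA : ∀ e : ℂ, E ≠ e • A := fun e => by simpa using hdist 4 0 (by decide) e
  have npAF : ∀ e : ℂ, A ≠ e • F := fun e => by simpa using hdist 0 5 (by decide) e
  have npFA : ∀ e : ℂ, F ≠ e • A := fun e => by simpa using hdist 5 0 (by decide) e
  have npBC : ∀ e : ℂ, B ≠ e • C := fun e => by simpa using hdist 1 2 (by decide) e
  have npCB : ∀ e : ℂ, C ≠ e • B := fun e => by simpa using hdist 2 1 (by decide) e
  have npBD : ∀ e : ℂ, B ≠ e • D := fun e => by simpa using hdist 1 3 (by decide) e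
  have npDB : ∀ e : ℂ, D ≠ e • B := fun e => by simpa using hdist 3 1 (by decide) e
  have npBE : ∀ e : ℂ, B ≠ e • E := fun e => by simpa using hdist 1 4 (by decide) e
  have npEB : ∀ e : ℂ, E ≠ e • B := fun e => by simpa using hdist 4 1 (by decide) e
  have npBF : ∀ e : ℂ, B ≠ e • F := fun e => by simpa using hdist 1 5 (by decide) e
  have npFB : ∀ e : ℂ, F ≠ e • B := fun e => by simpa using hdist 5 1 (by decide) e
  have npCD : ∀ e : ℂ, C ≠ e • D := fun e => by simpa using hdist 2 3 (by decide) e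
  have npDC : ∀ e : ℂ, D ≠ e • C := fun e => by simpa using hdist 3 2 (by decide) e
  have npCF : ∀ e : ℂ, C ≠ e • F := fun e => by simpa using hdist 2 5 (by decide) e
  have npFC : ∀ e : ℂ, F ≠ e • C := fun e => by simpa using hdist 5 2 (by decide) e
  have npDF : ∀ e : ℂ, D ≠ e • F := fun e => by simpa using hdist 3 5 (by decide) e
  have npFD : ∀ e : ℂ, F ≠ e • D := fun e => by simpa using hdist 5 3 (by decide) e
  have npEF : ∀ e : ℂ, E ≠ e • F := fun e => by simpa using hdist 4 5 (by decide) e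
  have npFE : ∀ e : ℂ, F ≠ e • E := fun e => by simpa using hdist 5 4 (by decide) e
  have hA0 : A ≠ 0 := by simpa using hdist 0 1 (by decide) 0
  have hB0 : B ≠ 0 := by simpa using hdist 1 0 (by decide) 0
  have hC0 : C ≠ 0 := by simpa using hdist 2 0 (by decide) 0
  have hD0 : D ≠ 0 := by simpa using hdist 3 0 (by decide) 0
  have hE0 : E ≠ 0 := by simpa using hdist 4 0 (by decide) 0
  have hF0 : F ≠ 0 := by simpa using hdist 5 0 (by decide) 0
  obtain ⟨cA, sA, tA, hcA, hpA⟩ := param hKA hA0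
  obtain ⟨cB, sB, tB, hcB, hpB⟩ := param hKB hB0
  obtain ⟨cC, sC, tC, hcC, hpC⟩ := param hKC hC0
  obtain ⟨cD, sD, tD, hcD, hpD⟩ := param hKD hD0
  obtain ⟨cE, sE, tE, hcE, hpE⟩ := param hKE hE0
  obtain ⟨cF, sF, tF, hcF, hpF⟩ := param hKF hF0
  have rAB : sA*tB - sB*tA ≠ 0 := res_ne hcA hcB hpA hpB npAB npBA
  have rAC : sA*tC - sC*tA ≠ 0 := res_ne hcA hcC hpA hpC npAC npCA
  have rAD : sA*tD - sD*tA ≠ 0 := res_ne hcA hcD hpA hpD npAD npDA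
  have rAE : sA*tE - sE*tA ≠ 0 := res_ne hcA hcE hpA hpE npAE npEA
  have rAF : sA*tF - sF*tA ≠ 0 := res_ne hcA hcF hpA hpF npAF npFA
  have rBC : sB*tC - sC*tB ≠ 0 := res_ne hcB hcC hpB hpC npBC npCB
  have rBD : sB*tD - sD*tB ≠ 0 := res_ne hcB hcD hpB hpD npBD npDB
  have rBE : sB*tE - sE*tB ≠ 0 := res_ne hcB hcE hpB hpE npBE npEB
  have rBF : sB*tF - sF*tB ≠ 0 := res_ne hcB hcF hpB hpF npBF npFB
  have rCD : sC*tD - sD*tC ≠ 0 := res_ne hcC hcD hpC hpD npCD npDC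
  have rCF : sC*tF - sF*tC ≠ 0 := res_ne hcC hcF hpC hpF npCF npFC
  have rDF : sD*tF - sF*tD ≠ 0 := res_ne hcD hcF hpD hpF npDF npFD
  have rEF : sE*tF - sF*tE ≠ 0 := res_ne hcE hcF hpE hpF npEF npFE
  rw [hpA, hpB, hpC, hpD, hpE, hpF, pascal_smul, pascal_smul, smul_cross₃, cross_smul₃, smul_smul]
  apply smul_ne_zero
  · simp [hcA, hcB, hcC, hcD, hcE, hcF, pow_eq_zero_iff]
  · exact core sA tA sB tB sC tC sD tD sE tE sF tF rAB rAC rAD rAE rAF rBC rBD rBE rBF rCD rCF rDF rEF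

end

end PascalStmt
end

section
/- Let A, B, C, D, E, F be any six pairwise non-proportional points of the conic K. Then the Pascal lines of the arrays [[A,B,C],[F,E,D]] and [[A,C,B],[E,D,F]] never coincide: the cross product of the two Pascal vectors is nonzero. -/
open Matrix

namespace PascalStmt

infixl:74 " ×₃ " => crossProduct

noncomputable section

/-! ### Auxiliary machinery -/

/-- The Veronese parametrization of the conic. -/
def nuV (s t : ℂ) : Fin 3 → ℂ := ![s^2, s*t, t^2]

/-- The "line form": `nuV s t ×₃ nuV u v = (s*v - t*u) • Lv s t u v`. -/
def Lv (s t u v : ℂ) : Fin 3 → ℂ := ![t*v, -(s*v + t*u), s*u]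

lemma cross_smul_left (a : ℂ) (u v : Fin 3 → ℂ) : (a • u) ×₃ v = a • (u ×₃ v) := by
  funext i; fin_cases i <;>
    simp [cross_apply, Pi.smul_apply, smul_eq_mul] <;> ring

lemma cross_smul_right (a : ℂ) (u v : Fin 3 → ℂ) : u ×₃ (a • v) = a • (u ×₃ v) := by
  funext i; fin_cases i <;>
    simp [cross_apply, Pi.smul_apply, smul_eq_mul] <;> ring

lemma cross_smul_smul (a b : ℂ) (u v : Fin 3 → ℂ) :
    (a • u) ×₃ (b • v) = (a * b) • (u ×₃ v) := by
  rw [cross_smul_left, cross_smul_right, smul_smul]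

lemma cross_nu (s t u v : ℂ) :
    nuV s t ×₃ nuV u v = (s*v - t*u) • Lv s t u v := by
  funext i; fin_cases i <;>
    simp [cross_apply, nuV, Lv, Pi.smul_apply, smul_eq_mul] <;> ring

lemma cross_nu_smul (l m s t u v : ℂ) :
    (l • nuV s t) ×₃ (m • nuV u v) = (l * m * (s*v - t*u)) • Lv s t u v := by
  funext i; fin_cases i <;>
    simp [cross_apply, nuV, Lv, Pi.smul_apply, smul_eq_mul] <;> ring

/-- Decomposition of a nonzero point of the conic. -/
lemma decomp {y : Fin 3 → ℂ} (hK : OnK y) (hy : y ≠ 0) :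
    ∃ l s t : ℂ, l ≠ 0 ∧ (s ≠ 0 ∨ t ≠ 0) ∧ y = l • nuV s t := by
  by_cases h0 : y 0 = 0
  · have h1 : y 1 = 0 := by
      have h : y 1 ^ 2 = 0 := by rw [← hK, h0]; ring
      exact pow_eq_zero_iff (n := 2) (by norm_num) |>.mp h
    have h2 : y 2 ≠ 0 := by
      intro h2
      apply hy
      funext i; fin_cases i <;> simp [h0, h1, h2]
    refine ⟨y 2, 0, 1, h2, Or.inr one_ne_zero, ?_⟩
    funext i; fin_cases i <;> simp [nuV, h0, h1]
  · refine ⟨(y 0)⁻¹, y 0, y 1, inv_ne_zero h0, Or.inl h0, ?_⟩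
    funext i; fin_cases i
    · show y 0 = (y 0)⁻¹ * y 0 ^ 2
      field_simp
    · show y 1 = (y 0)⁻¹ * (y 0 * y 1)
      field_simp
    · show y 2 = (y 0)⁻¹ * y 1 ^ 2
      have hK' : y 0 * y 2 = y 1 ^ 2 := hK
      field_simp
      linear_combination hK' 

/-- Non-proportional points of the conic have nonzero bracket. -/
lemma bracket_ne {P Q : Fin 3 → ℂ} {l m s t u v : ℂ}
    (hP : P = l • nuV s t) (hQ : Q = m • nuV u v)
    (hm : m ≠ 0) (huv : u ≠ 0 ∨ v ≠ 0)
    (h : ∀ c : ℂ, P ≠ c • Q) : s * v - t * u ≠ 0 := by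
  intro hb
  rcases huv with hu | hv
  · have hνeq : nuV s t = ((s/u)^2) • nuV u v := by
      funext i; fin_cases i
      · show s ^ 2 = (s/u)^2 * u^2
        field_simp
      · show s * t = (s/u)^2 * (u * v)
        field_simp
        linear_combination (-s)*hb
      · show t ^ 2 = (s/u)^2 * v^2
        field_simp
        linear_combination (-(s*v + t*u))*hb
    apply h (l * (s/u)^2 * m⁻¹)
    rw [hP, hQ, hνeq, smul_smul, smul_smul]
    congr 1
    field_simp
  · have hνeq : nuV s t = ((t/v)^2) • nuV u v := by
      funext i; fin_cases i
      · show s ^ 2 = (t/v)^2 * u^2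
        field_simp
        linear_combination ((s*v + t*u))*hb
      · show s * t = (t/v)^2 * (u * v)
        field_simp
        linear_combination (t)*hb
      · show t ^ 2 = (t/v)^2 * v^2
        field_simp
    apply h (l * (t/v)^2 * m⁻¹)
    rw [hP, hQ, hνeq, smul_smul, smul_smul]
    congr 1
    field_simp

lemma dot_smul3 (a b c : ℂ) (u v w : Fin 3 → ℂ) :
    ((a • u) ×₃ (b • v)) ⬝ᵥ (c • w) = (a * b * c) * ((u ×₃ v) ⬝ᵥ w) := by
  rw [cross_smul_left, cross_smul_right, smul_smul, smul_dotProduct,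
    dotProduct_smul, smul_eq_mul, smul_eq_mul]
  ring

set_option maxHeartbeats 1000000 in
/-- The Pascal vector of an array of scaled Veronese points. -/
lemma pv (l1 l2 l3 l4 l5 l6 a1 b1 a2 b2 a3 b3 a4 b4 a5 b5 a6 b6 : ℂ) :
    pascalVec (l1 • nuV a1 b1) (l2 • nuV a2 b2) (l3 • nuV a3 b3)
      (l4 • nuV a4 b4) (l5 • nuV a5 b5) (l6 • nuV a6 b6) =
    (l1^2*l2*l3*l4^2*l5*l6*(a1*b5 - a5*b1)*(a2*b4 - a4*b2)*(a1*b6 - a6*b1)*(a3*b4 - a4*b3)) •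
      ((Lv a1 b1 a5 b5 ×₃ Lv a2 b2 a4 b4) ×₃ (Lv a1 b1 a6 b6 ×₃ Lv a3 b3 a4 b4)) := by
  unfold pascalVec chX1 chX2
  simp only [cross_smul_smul, cross_nu, smul_smul]
  congr 1
  ring

set_option maxHeartbeats 2000000 in
lemma U_eq (s1 t1 s2 t2 s3 t3 s4 t4 s5 t5 s6 t6 : ℂ) :
    (Lv s1 t1 s5 t5 ×₃ Lv s2 t2 s6 t6) ×₃ (Lv s1 t1 s4 t4 ×₃ Lv s3 t3 s6 t6) =
    ![(-s1^2*s4*t2*t3*t5*t6^2 + s1^2*s5*t2*t3*t4*t6^2 + s1*s2*s4*t1*t3*t5*t6^2 - s1*s2*s6*t1*t3*t4*t5*t6 - s1*s3*s5*t1*t2*t4*t6^2 + s1*s3*s6*t1*t2*t4*t5*t6 + s1*s4*s6*t1*t2*t3*t5*t6 - s1*s5*s6*t1*t2*t3*t4*t6 - s2*s4*s6*t1^2*t3*t5*t6 + s2*s6^2*t1^2*t3*t4*t5 + s3*s5*s6*t1^2*t2*t4*t6 - s3*s6^2*t1^2*t2*t4*t5), (-s1^2*s2*s5*t3*t4*t6^2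 + s1^2*s2*s6*t3*t4*t5*t6 + s1^2*s3*s4*t2*t5*t6^2 - s1^2*s3*s6*t2*t4*t5*t6 + s1^2*s4*s6*t2*t3*t5*t6 - s1^2*s5*s6*t2*t3*t4*t6 - s1*s2*s3*s4*t1*t5*t6^2 + s1*s2*s3*s5*t1*t4*t6^2 - s1*s2*s4*s5*t1*t3*t6^2 + 2*s1*s2*s5*s6*t1*t3*t4*t6 - s1*s2*s6^2*t1*t3*t4*t5 + s1*s3*s4*s5*t1*t2*t6^2 - 2*s1*s3*s4*s6*t1*t2*t5*t6 + s1*s3*s6^2*t1*t2*t4*t5 - s1*s4*s6^2*t1*t2*t3*t5 + s1*s5*s6^2*t1*t2*t3*t4 + s2*s3*s4*s6*t1^2*t5*t6 - s2*s3*s5*s6*t1^2*t4*t6 + s2*s4*s5*s6*t1^2*t3*t6 - s2*s5*s6^2*t1^2*t3*t4 - s3*s4*s5*s6*t1^2*t2*t6 + s3*s4*s6^2*t1^2*t2*t5), (s1^2*s2*s4*s5*t3*t6^2 - s1^2*s2*s4*s6*t3*t5*t6 - s1^2*s3*s4*s5*t2*t6^2 + s1^2*s3*s5*s6*t2*t4*t6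 + s1*s2*s3*s4*s6*t1*t5*t6 - s1*s2*s3*s5*s6*t1*t4*t6 - s1*s2*s4*s5*s6*t1*t3*t6 + s1*s2*s4*s6^2*t1*t3*t5 + s1*s3*s4*s5*s6*t1*t2*t6 - s1*s3*s5*s6^2*t1*t2*t4 - s2*s3*s4*s6^2*t1^2*t5 + s2*s3*s5*s6^2*t1^2*t4)] := by
  funext i; fin_cases i <;>
    simp only [Lv, cross_apply, Matrix.cons_val_zero, Matrix.cons_val_one,
      Matrix.head_cons, Matrix.cons_val_two, Matrix.tail_cons] <;> ring

set_option maxHeartbeats 2000000 in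
lemma W_eq (s1 t1 s2 t2 s3 t3 s4 t4 s5 t5 s6 t6 : ℂ) :
    (Lv s1 t1 s4 t4 ×₃ Lv s3 t3 s5 t5) ×₃ (Lv s1 t1 s6 t6 ×₃ Lv s2 t2 s5 t5) =
    ![(s1^2*s4*t2*t3*t5^2*t6 - s1^2*s6*t2*t3*t4*t5^2 - s1*s2*s4*t1*t3*t5^2*t6 + s1*s2*s5*t1*t3*t4*t5*t6 - s1*s3*s5*t1*t2*t4*t5*t6 + s1*s3*s6*t1*t2*t4*t5^2 - s1*s4*s5*t1*t2*t3*t5*t6 + s1*s5*s6*t1*t2*t3*t4*t5 + s2*s4*s5*t1^2*t3*t5*t6 - s2*s5^2*t1^2*t3*t4*t6 + s3*s5^2*t1^2*t2*t4*t6 - s3*s5*s6*t1^2*t2*t4*t5), (-s1^2*s2*s5*t3*t4*t5*t6 + s1^2*s2*s6*t3*t4*t5^2 - s1^2*s3*s4*t2*t5^2*t6 + s1^2*s3*s5*t2*t4*t5*t6 - s1^2*s4*s5*t2*t3*t5*t6 + s1^2*s5*s6*t2*t3*t4*t5 + s1*s2*s3*s4*t1*t5^2*t6 - s1*s2*s3*s6*t1*t4*t5^2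 + s1*s2*s4*s6*t1*t3*t5^2 + s1*s2*s5^2*t1*t3*t4*t6 - 2*s1*s2*s5*s6*t1*t3*t4*t5 + 2*s1*s3*s4*s5*t1*t2*t5*t6 - s1*s3*s4*s6*t1*t2*t5^2 - s1*s3*s5^2*t1*t2*t4*t6 + s1*s4*s5^2*t1*t2*t3*t6 - s1*s5^2*s6*t1*t2*t3*t4 - s2*s3*s4*s5*t1^2*t5*t6 + s2*s3*s5*s6*t1^2*t4*t5 - s2*s4*s5*s6*t1^2*t3*t5 + s2*s5^2*s6*t1^2*t3*t4 - s3*s4*s5^2*t1^2*t2*t6 + s3*s4*s5*s6*t1^2*t2*t5), (s1^2*s2*s4*s5*t3*t5*t6 - s1^2*s2*s4*s6*t3*t5^2 + s1^2*s3*s4*s6*t2*t5^2 - s1^2*s3*s5*s6*t2*t4*t5 - s1*s2*s3*s4*s5*t1*t5*t6 + s1*s2*s3*s5*s6*t1*t4*t5 - s1*s2*s4*s5^2*t1*t3*t6 + s1*s2*s4*s5*s6*t1*t3*t5 - s1*s3*s4*s5*s6*t1*t2*t5 + s1*s3*s5^2*s6*t1*t2*t4 + s2*s3*s4*s5^2*t1^2*t6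 - s2*s3*s5^2*s6*t1^2*t4)] := by
  funext i; fin_cases i <;>
    simp only [Lv, cross_apply, Matrix.cons_val_zero, Matrix.cons_val_one,
      Matrix.head_cons, Matrix.cons_val_two, Matrix.tail_cons] <;> ring

set_option maxHeartbeats 2000000 in
lemma key (s1 t1 s2 t2 s3 t3 s4 t4 s5 t5 s6 t6 : ℂ) :
    ((![(-s1^2*s4*t2*t3*t5*t6^2 + s1^2*s5*t2*t3*t4*t6^2 + s1*s2*s4*t1*t3*t5*t6^2 - s1*s2*s6*t1*t3*t4*t5*t6 - s1*s3*s5*t1*t2*t4*t6^2 + s1*s3*s6*t1*t2*t4*t5*t6 + s1*s4*s6*t1*t2*t3*t5*t6 - s1*s5*s6*t1*t2*t3*t4*t6 - s2*s4*s6*t1^2*t3*t5*t6 + s2*s6^2*t1^2*t3*t4*t5 + s3*s5*s6*t1^2*t2*t4*t6 - s3*s6^2*t1^2*t2*t4*t5), (-s1^2*s2*s5*t3*t4*t6^2 + s1^2*s2*s6*t3*t4*t5*t6 + s1^2*s3*s4*t2*t5*t6^2 - s1^2*s3*s6*t2*t4*t5*t6 + s1^2*s4*s6*t2*t3*t5*t6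 - s1^2*s5*s6*t2*t3*t4*t6 - s1*s2*s3*s4*t1*t5*t6^2 + s1*s2*s3*s5*t1*t4*t6^2 - s1*s2*s4*s5*t1*t3*t6^2 + 2*s1*s2*s5*s6*t1*t3*t4*t6 - s1*s2*s6^2*t1*t3*t4*t5 + s1*s3*s4*s5*t1*t2*t6^2 - 2*s1*s3*s4*s6*t1*t2*t5*t6 + s1*s3*s6^2*t1*t2*t4*t5 - s1*s4*s6^2*t1*t2*t3*t5 + s1*s5*s6^2*t1*t2*t3*t4 + s2*s3*s4*s6*t1^2*t5*t6 - s2*s3*s5*s6*t1^2*t4*t6 + s2*s4*s5*s6*t1^2*t3*t6 - s2*s5*s6^2*t1^2*t3*t4 - s3*s4*s5*s6*t1^2*t2*t6 + s3*s4*s6^2*t1^2*t2*t5), (s1^2*s2*s4*s5*t3*t6^2 - s1^2*s2*s4*s6*t3*t5*t6 - s1^2*s3*s4*s5*t2*t6^2 + s1^2*s3*s5*s6*t2*t4*t6 + s1*s2*s3*s4*s6*t1*t5*t6 - s1*s2*s3*s5*s6*t1*t4*t6 - s1*s2*s4*s5*s6*t1*t3*t6 + s1*s2*s4*s6^2*t1*t3*t5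 + s1*s3*s4*s5*s6*t1*t2*t6 - s1*s3*s5*s6^2*t1*t2*t4 - s2*s3*s4*s6^2*t1^2*t5 + s2*s3*s5*s6^2*t1^2*t4)]) ×₃
     (![(s1^2*s4*t2*t3*t5^2*t6 - s1^2*s6*t2*t3*t4*t5^2 - s1*s2*s4*t1*t3*t5^2*t6 + s1*s2*s5*t1*t3*t4*t5*t6 - s1*s3*s5*t1*t2*t4*t5*t6 + s1*s3*s6*t1*t2*t4*t5^2 - s1*s4*s5*t1*t2*t3*t5*t6 + s1*s5*s6*t1*t2*t3*t4*t5 + s2*s4*s5*t1^2*t3*t5*t6 - s2*s5^2*t1^2*t3*t4*t6 + s3*s5^2*t1^2*t2*t4*t6 - s3*s5*s6*t1^2*t2*t4*t5), (-s1^2*s2*s5*t3*t4*t5*t6 + s1^2*s2*s6*t3*t4*t5^2 - s1^2*s3*s4*t2*t5^2*t6 + s1^2*s3*s5*t2*t4*t5*t6 - s1^2*s4*s5*t2*t3*t5*t6 + s1^2*s5*s6*t2*t3*t4*t5 + s1*s2*s3*s4*t1*t5^2*t6 - s1*s2*s3*s6*t1*t4*t5^2 + s1*s2*s4*s6*t1*t3*t5^2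 + s1*s2*s5^2*t1*t3*t4*t6 - 2*s1*s2*s5*s6*t1*t3*t4*t5 + 2*s1*s3*s4*s5*t1*t2*t5*t6 - s1*s3*s4*s6*t1*t2*t5^2 - s1*s3*s5^2*t1*t2*t4*t6 + s1*s4*s5^2*t1*t2*t3*t6 - s1*s5^2*s6*t1*t2*t3*t4 - s2*s3*s4*s5*t1^2*t5*t6 + s2*s3*s5*s6*t1^2*t4*t5 - s2*s4*s5*s6*t1^2*t3*t5 + s2*s5^2*s6*t1^2*t3*t4 - s3*s4*s5^2*t1^2*t2*t6 + s3*s4*s5*s6*t1^2*t2*t5), (s1^2*s2*s4*s5*t3*t5*t6 - s1^2*s2*s4*s6*t3*t5^2 + s1^2*s3*s4*s6*t2*t5^2 - s1^2*s3*s5*s6*t2*t4*t5 - s1*s2*s3*s4*s5*t1*t5*t6 + s1*s2*s3*s5*s6*t1*t4*t5 - s1*s2*s4*s5^2*t1*t3*t6 + s1*s2*s4*s5*s6*t1*t3*t5 - s1*s3*s4*s5*s6*t1*t2*t5 + s1*s3*s5^2*s6*t1*t2*t4 + s2*s3*s4*s5^2*t1^2*t6 - s2*s3*s5^2*s6*t1^2*t4)]))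 ⬝ᵥ Lv s1 t1 s4 t4 =
    -((s1*t2 - s2*t1)^2 * (s1*t3 - s3*t1) * (s1*t5 - s5*t1) * (s1*t6 - s6*t1) * (s3*t4 - s4*t3) * (s4*t5 - s5*t4) * (s4*t6 - s6*t4) * (s5*t6 - s6*t5)) := by
  simp only [Lv, cross_apply, Matrix.cons_val_zero, Matrix.cons_val_one,
    Matrix.head_cons, Matrix.cons_val_two, Matrix.tail_cons, Matrix.vec3_dotProduct]
  ring

theorem pascals_never_coincide_I7
    (A B C D E F : Fin 3 → ℂ)
    (hdist : PairwiseNonProp ![A, B, C, D, E, F])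
    (hKA : OnK A) (hKB : OnK B) (hKC : OnK C)
    (hKD : OnK D) (hKE : OnK E) (hKF : OnK F) :
    pascalVec A B C F E D ×₃ pascalVec A C B E D F ≠ 0 := by
  have hA0 : A ≠ 0 := by have := hdist 0 1 (by decide) 0; simpa using this
  have hB0 : B ≠ 0 := by have := hdist 1 0 (by decide) 0; simpa using this
  have hC0 : C ≠ 0 := by have := hdist 2 0 (by decide) 0; simpa using this
  have hD0 : D ≠ 0 := by have := hdist 3 0 (by decide) 0; simpa using this
  have hE0 : E ≠ 0 := by have := hdist 4 0 (by decide) 0; simpa using this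
  have hF0 : F ≠ 0 := by have := hdist 5 0 (by decide) 0; simpa using this
  obtain ⟨l1, s1, t1, hl1, hst1, hA⟩ := decomp hKA hA0
  obtain ⟨l2, s2, t2, hl2, hst2, hB⟩ := decomp hKB hB0
  obtain ⟨l3, s3, t3, hl3, hst3, hC⟩ := decomp hKC hC0
  obtain ⟨l4, s4, t4, hl4, hst4, hD⟩ := decomp hKD hD0
  obtain ⟨l5, s5, t5, hl5, hst5, hE⟩ := decomp hKE hE0
  obtain ⟨l6, s6, t6, hl6, hst6, hF⟩ := decomp hKF hF0
  have h12 : ∀ c : ℂ, A ≠ c • B := fun c => by have := hdist 0 1 (by decide) c; simpa using this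
  have h13 : ∀ c : ℂ, A ≠ c • C := fun c => by have := hdist 0 2 (by decide) c; simpa using this
  have h14 : ∀ c : ℂ, A ≠ c • D := fun c => by have := hdist 0 3 (by decide) c; simpa using this
  have h15 : ∀ c : ℂ, A ≠ c • E := fun c => by have := hdist 0 4 (by decide) c; simpa using this
  have h16 : ∀ c : ℂ, A ≠ c • F := fun c => by have := hdist 0 5 (by decide) c; simpa using this
  have h25 : ∀ c : ℂ, B ≠ c • E := fun c => by have := hdist 1 4 (by decide) c; simpa using this
  have h26 : ∀ c : ℂ, B ≠ c • F := fun c => by have := hdist 1 5 (by decide) c; simpa using this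
  have h34 : ∀ c : ℂ, C ≠ c • D := fun c => by have := hdist 2 3 (by decide) c; simpa using this
  have h35 : ∀ c : ℂ, C ≠ c • E := fun c => by have := hdist 2 4 (by decide) c; simpa using this
  have h36 : ∀ c : ℂ, C ≠ c • F := fun c => by have := hdist 2 5 (by decide) c; simpa using this
  have h45 : ∀ c : ℂ, D ≠ c • E := fun c => by have := hdist 3 4 (by decide) c; simpa using this
  have h46 : ∀ c : ℂ, D ≠ c • F := fun c => by have := hdist 3 5 (by decide) c; simpa using this
  have h56 : ∀ c : ℂ, E ≠ c • F := fun c => by have := hdist 4 5 (by decide) c; simpa using this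
  have b12 := bracket_ne hA hB hl2 hst2 h12
  have b13 := bracket_ne hA hC hl3 hst3 h13
  have b14 := bracket_ne hA hD hl4 hst4 h14
  have b15 := bracket_ne hA hE hl5 hst5 h15
  have b16 := bracket_ne hA hF hl6 hst6 h16
  have b25 := bracket_ne hB hE hl5 hst5 h25
  have b26 := bracket_ne hB hF hl6 hst6 h26
  have b34 := bracket_ne hC hD hl4 hst4 h34
  have b35 := bracket_ne hC hE hl5 hst5 h35
  have b36 := bracket_ne hC hF hl6 hst6 h36
  have b45 := bracket_ne hD hE hl5 hst5 h45
  have b46 := bracket_ne hD hF hl6 hst6 h46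
  have b56 := bracket_ne hE hF hl6 hst6 h56
  intro hzero
  have hdot : (pascalVec A B C F E D ×₃ pascalVec A C B E D F) ⬝ᵥ (A ×₃ D) = 0 := by
    rw [hzero]; exact zero_dotProduct _
  have c15 : s1*t5 - s5*t1 ≠ 0 := fun h => b15 (by linear_combination h)
  have c26 : s2*t6 - s6*t2 ≠ 0 := fun h => b26 (by linear_combination h)
  have c14 : s1*t4 - s4*t1 ≠ 0 := fun h => b14 (by linear_combination h)
  have c36 : s3*t6 - s6*t3 ≠ 0 := fun h => b36 (by linear_combination h)
  have c35 : s3*t5 - s5*t3 ≠ 0 := fun h => b35 (by linear_combination h)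
  have c16 : s1*t6 - s6*t1 ≠ 0 := fun h => b16 (by linear_combination h)
  have c25 : s2*t5 - s5*t2 ≠ 0 := fun h => b25 (by linear_combination h)
  have c12 : s1*t2 - s2*t1 ≠ 0 := fun h => b12 (by linear_combination h)
  have c13 : s1*t3 - s3*t1 ≠ 0 := fun h => b13 (by linear_combination h)
  have c34 : s3*t4 - s4*t3 ≠ 0 := fun h => b34 (by linear_combination h)
  have c45 : s4*t5 - s5*t4 ≠ 0 := fun h => b45 (by linear_combination h)
  have c46 : s4*t6 - s6*t4 ≠ 0 := fun h => b46 (by linear_combination h)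
  have c56 : s5*t6 - s6*t5 ≠ 0 := fun h => b56 (by linear_combination h)
  rw [hA, hB, hC, hD, hE, hF, pv, pv, cross_nu_smul, dot_smul3, U_eq, W_eq, key] at hdot
  exact (mul_ne_zero (mul_ne_zero (mul_ne_zero (mul_ne_zero (mul_ne_zero (mul_ne_zero (mul_ne_zero (mul_ne_zero (mul_ne_zero (mul_ne_zero (mul_ne_zero (mul_ne_zero (pow_ne_zero 2 hl1) hl2) hl3) (pow_ne_zero 2 hl6)) hl5) hl4) c15) c26) c14) c36) (mul_ne_zero (mul_ne_zero (mul_ne_zero (mul_ne_zero (mul_ne_zero (mul_ne_zero (mul_ne_zero (mul_ne_zero (mul_ne_zero (pow_ne_zero 2 hl1) hl3) hl2) (pow_ne_zero 2 hl5)) hl4) hl6) c14) c35) c16) c25)) (mul_ne_zero (mul_ne_zero hl1 hl4) b14))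
    (neg_ne_zero.mpr (mul_ne_zero (mul_ne_zero (mul_ne_zero (mul_ne_zero (mul_ne_zero (mul_ne_zero (mul_ne_zero (pow_ne_zero 2 c12) c13) c15) c16) c34) c45) c46) c56))) hdot

end

end PascalStmt
end
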